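/- Let G ∈ S^n_+ ∩ S^n_C be a centered PSD matrix of rank d with centered facial vector V (range(V) = range(G), Vᵀe = 0, full column rank) and full rank factorization G = WWᵀ. Let α ⊆ [n] with |α| ≥ d+1 be such that G_α := K†(K(G)_α) satisfies rank(G_α) = d, with full rank factorization G_α = W_α W_αᵀ, and let V_α := P_α(V) be the corresponding rows of V. Then K†(P_α(K(G))) = J P_α(G) J = G_α, and for Q solving J V_α Q = W_α one has P_α(K(V Q Qᵀ Vᵀ) - K(G)) = 0, i.e., the EDM restricted to α is recovered: K(VQQᵀVᵀ)_α = D_α. -/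

import Mathlib

open Matrix BigOperators

noncomputable section

def lind {ι : Type*} [Fintype ι] (M : Matrix ι ι ℝ) : Matrix ι ι ℝ :=
  Matrix.of fun i j => M i i + M j j - 2 * M i j

def Jmat (ι : Type*) [Fintype ι] [DecidableEq ι] : Matrix ι ι ℝ :=
  (1 : Matrix ι ι ℝ) - (Fintype.card ι : ℝ)⁻¹ • Matrix.of (fun _ _ => (1 : ℝ))

/-!
`K` only sees a matrix modulo the symmetric rank-two perturbations `r 1ᵀ + 1 rᵀ`, and for a
symmetric `A` the double centering `J A J` differs from `A` by exactly such a perturbation.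
Hence `K(J A J) = K(A)`, so symmetric matrices with the same double centering have the same
image under `K`. On the block `α`, the matrices `P_α(G)` and `P_α(V Q Qᵀ Vᵀ)` both have
double centering `G_α`: the first by `K†K = J · J`, the second because
`J V_α Q (J V_α Q)ᵀ = W_α W_αᵀ`.
-/

section Lindenstrauss

variable {ι : Type*} [Fintype ι]

lemma lind_submatrix {κ : Type*} [Fintype κ] (M : Matrix ι ι ℝ) (c : κ → ι) :
    (lind M).submatrix c c = lind (M.submatrix c c) :=
  rfl

variable [DecidableEq ι]

lemma Jmat_transpose : (Jmat ι)ᵀ = Jmat ι := by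
  ext i j
  simp [Jmat, one_apply, eq_comm]

lemma mul_Jmat_apply (M : Matrix ι ι ℝ) (i j : ι) :
    (M * Jmat ι) i j = M i j - (Fintype.card ι : ℝ)⁻¹ * ∑ l, M i l := by
  simp only [Jmat, mul_sub, mul_apply, Matrix.sub_apply, Matrix.smul_apply, smul_eq_mul, of_apply, one_apply,
    mul_ite, mul_one, mul_zero, Finset.sum_sub_distrib, Finset.sum_ite_eq', Finset.mem_univ,
    if_true, ← Finset.sum_mul]
  ring

lemma Jmat_mul_apply (M : Matrix ι ι ℝ) (i j : ι) :
    (Jmat ι * M) i j = M i j - (Fintype.card ι : ℝ)⁻¹ * ∑ l, M l j := by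
  simp only [Jmat, sub_mul, mul_apply, Matrix.sub_apply, Matrix.smul_apply, smul_eq_mul, of_apply, one_apply,
    ite_mul, one_mul, zero_mul, Finset.sum_ite_eq, Finset.mem_univ, if_true,
    Finset.sum_sub_distrib, ← Finset.mul_sum]
  ring

lemma Jmat_mul_mul_Jmat_apply (M : Matrix ι ι ℝ) (i j : ι) :
    (Jmat ι * M * Jmat ι) i j = M i j
      - (Fintype.card ι : ℝ)⁻¹ * ∑ l, M l j
      - (Fintype.card ι : ℝ)⁻¹ * ∑ l, M i l
      + (Fintype.card ι : ℝ)⁻¹ * (Fintype.card ι : ℝ)⁻¹ * ∑ l, ∑ m, M l m := by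
  simp only [mul_Jmat_apply, Jmat_mul_apply, Finset.sum_sub_distrib, ← Finset.mul_sum]
  rw [Finset.sum_comm]
  ring

lemma smul_Jmat_mul_lind_mul_Jmat (M : Matrix ι ι ℝ) :
    (-(1 / 2 : ℝ)) • (Jmat ι * lind M * Jmat ι) = Jmat ι * M * Jmat ι := by
  rcases isEmpty_or_nonempty ι with hι | hι
  · exact Subsingleton.elim _ _
  have hk : (Fintype.card ι : ℝ) ≠ 0 := by positivity
  ext i j
  simp only [Matrix.smul_apply, smul_eq_mul, Jmat_mul_mul_Jmat_apply, lind, of_apply,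
    Finset.sum_add_distrib, Finset.sum_sub_distrib, Finset.sum_const, Finset.card_univ,
    nsmul_eq_mul, ← Finset.mul_sum]
  field_simp
  ring

lemma lind_Jmat_mul_mul_Jmat {A : Matrix ι ι ℝ} (hA : A.IsSymm) :
    lind (Jmat ι * A * Jmat ι) = lind A := by
  have hsum : ∀ a, ∑ l, A l a = ∑ l, A a l := fun a => Finset.sum_congr rfl fun l _ => hA.apply a l
  ext i j
  simp only [lind, of_apply, Jmat_mul_mul_Jmat_apply, hsum]
  ring

lemma lind_eq_lind_of_Jmat_conj_eq {A B : Matrix ι ι ℝ} (hA : A.IsSymm) (hB : B.IsSymm)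
    (h : Jmat ι * A * Jmat ι = Jmat ι * B * Jmat ι) : lind A = lind B := by
  rw [← lind_Jmat_mul_mul_Jmat hA, h, lind_Jmat_mul_mul_Jmat hB]

lemma Jmat_mul_mul_transpose_mul_Jmat {κ : Type*} [Fintype κ] (X : Matrix ι κ ℝ) :
    Jmat ι * (X * Xᵀ) * Jmat ι = (Jmat ι * X) * (Jmat ι * X)ᵀ := by
  rw [transpose_mul, Jmat_transpose]
  simp only [Matrix.mul_assoc]

end Lindenstrauss

theorem block_recovery_general (n d : ℕ) (G : Matrix (Fin n) (Fin n) ℝ)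
    (hG : G.PosSemidef)
    (V : Matrix (Fin n) (Fin d) ℝ)
    (α : Finset (Fin n))
    (Gα : Matrix α α ℝ)
    (hGα : Gα = (-(1 / 2 : ℝ)) • (Jmat α *
      (lind G).submatrix (fun i : α => (i : Fin n)) (fun i : α => (i : Fin n)) *
      Jmat α))
    (Wα : Matrix α (Fin d) ℝ) (hWα : Gα = Wα * Wαᵀ)
    (Q : Matrix (Fin d) (Fin d) ℝ)
    (hQ : Jmat α * ((V.submatrix (fun i : α => (i : Fin n)) id) * Q) = Wα) :
    Gα = Jmat α *
        G.submatrix (fun i : α => (i : Fin n)) (fun i : α => (i : Fin n)) * Jmat α ∧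
    (lind (V * Q * Qᵀ * Vᵀ)).submatrix
        (fun i : α => (i : Fin n)) (fun i : α => (i : Fin n)) =
      (lind G).submatrix (fun i : α => (i : Fin n)) (fun i : α => (i : Fin n)) := by
  set c : α → Fin n := fun i => (i : Fin n)
  have hGc : Gα = Jmat α * G.submatrix c c * Jmat α := by
    rw [hGα, lind_submatrix, smul_Jmat_mul_lind_mul_Jmat]
  refine ⟨hGc, ?_⟩
  have hblock : (V * Q * Qᵀ * Vᵀ).submatrix c c
      = (V.submatrix c id * Q) * (V.submatrix c id * Q)ᵀ := by
    rw [show V * Q * Qᵀ * Vᵀ = (V * Q) * (V * Q)ᵀ by simp only [transpose_mul, Matrix.mul_assoc],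
      submatrix_mul _ _ c id c Function.bijective_id, ← transpose_submatrix,
      submatrix_mul _ _ c id id Function.bijective_id, submatrix_id_id]
  have hconj : Jmat α * (V * Q * Qᵀ * Vᵀ).submatrix c c * Jmat α
      = Jmat α * G.submatrix c c * Jmat α := by
    rw [hblock, Jmat_mul_mul_transpose_mul_Jmat, hQ, ← hWα, hGc]
  rw [lind_submatrix, lind_submatrix]
  refine lind_eq_lind_of_Jmat_conj_eq ?_ ?_ hconj
  · rw [hblock, IsSymm, transpose_mul, transpose_transpose]
  · exact (isHermitian_iff_isSymm.mp hG.isHermitian).submatrix c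

/-- Recovery of a principal block of the EDM from facial vectors:
`K†(P_α(K(G))) = J P_α(G) J = G_α`, and if `Q` solves `J V_α Q = W_α`, then
`K(V Q Qᵀ Vᵀ)` agrees with `K(G)` on the block `α`. -/
theorem block_recovery (n d : ℕ) (G : Matrix (Fin n) (Fin n) ℝ)
    (hG : G.PosSemidef) (hGe : G *ᵥ (fun _ => (1 : ℝ)) = 0) (hGrank : G.rank = d)
    (V : Matrix (Fin n) (Fin d) ℝ) (hVrank : V.rank = d)
    (hVe : (fun _ => (1 : ℝ)) ᵥ* V = 0)
    (hrange : ∀ x : Fin n → ℝ, (∃ y, G *ᵥ y = x) ↔ ∃ c, V *ᵥ c = x)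
    (W : Matrix (Fin n) (Fin d) ℝ) (hW : G = W * Wᵀ)
    (α : Finset (Fin n)) (hα : d + 1 ≤ α.card)
    (Gα : Matrix α α ℝ)
    (hGα : Gα = (-(1 / 2 : ℝ)) • (Jmat α *
      (lind G).submatrix (fun i : α => (i : Fin n)) (fun i : α => (i : Fin n)) *
      Jmat α))
    (hGαrank : Gα.rank = d)
    (Wα : Matrix α (Fin d) ℝ) (hWα : Gα = Wα * Wαᵀ)
    (Q : Matrix (Fin d) (Fin d) ℝ)
    (hQ : Jmat α * ((V.submatrix (fun i : α => (i : Fin n)) id) * Q) = Wα) :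
    Gα = Jmat α *
        G.submatrix (fun i : α => (i : Fin n)) (fun i : α => (i : Fin n)) * Jmat α ∧
    (lind (V * Q * Qᵀ * Vᵀ)).submatrix
        (fun i : α => (i : Fin n)) (fun i : α => (i : Fin n)) =
      (lind G).submatrix (fun i : α => (i : Fin n)) (fun i : α => (i : Fin n)) :=
  block_recovery_general n d G hG V α Gα hGα Wα hWα Q hQ
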